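/- Let ξ ∈ ℝ³, ξ ≠ 0. Define 𝔞(ξ) = (−ξ1ξ2, ξ1²+ξ3², −ξ2ξ3) and 𝔟(ξ) = (−ξ3|ξ|, 0, ξ1|ξ|) if ξ1²+ξ3² > 0, and 𝔞(ξ) = (ξ2, 0, ξ2), 𝔟(ξ) = (|ξ2|, 0, −|ξ2|) if ξ1 = ξ3 = 0. Set N(ξ) = √(|𝔞(ξ)|²+|𝔟(ξ)|²). Then the six vectors of ℂ⁶ (written as pairs of ℂ³-vectors) (𝔞,𝔟)/N, (−𝔟,𝔞)/N, (0,ξ)/|ξ|, (ξ,0)/|ξ|, (−𝔞,𝔟)/N, (𝔟,𝔞)/N form an orthonormal basis of ℂ⁶ consisting of eigenvectors of M_maxwell(ξ): the first two have eigenvalue |ξ|, the middle two have eigenvalue 0, and the last two have eigenvalue −|ξ|. -/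

import Mathlib

open Complex

noncomputable section

/-- The Maxwell symbol `M_maxwell(ξ) = [[O₃, −γ(ξ)],[γ(ξ), O₃]]` where
`γ(ξ) = [[0,−ξ₃,ξ₂],[ξ₃,0,−ξ₁],[−ξ₂,ξ₁,0]]`, written out as a 6×6 matrix. -/
def maxwellSymbol (ξ : EuclideanSpace ℝ (Fin 3)) : Matrix (Fin 6) (Fin 6) ℂ :=
  !![0, 0, 0, 0, (ξ 2 : ℂ), -(ξ 1 : ℂ);
     0, 0, 0, -(ξ 2 : ℂ), 0, (ξ 0 : ℂ);
     0, 0, 0, (ξ 1 : ℂ), -(ξ 0 : ℂ), 0;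
     0, -(ξ 2 : ℂ), (ξ 1 : ℂ), 0, 0, 0;
     (ξ 2 : ℂ), 0, -(ξ 0 : ℂ), 0, 0, 0;
     -(ξ 1 : ℂ), (ξ 0 : ℂ), 0, 0, 0, 0]

/-- View a plain vector `Fin 3 → ℝ` as an element of `EuclideanSpace ℝ (Fin 3)`. -/
def toE3 (v : Fin 3 → ℝ) : EuclideanSpace ℝ (Fin 3) := WithLp.toLp 2 v

/-- View a plain vector `Fin 6 → ℂ` as an element of `EuclideanSpace ℂ (Fin 6)`. -/
def toC6 (v : Fin 6 → ℂ) : EuclideanSpace ℂ (Fin 6) := WithLp.toLp 2 v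

/-- The vector `𝔞(ξ)`. -/
def frakA (ξ : EuclideanSpace ℝ (Fin 3)) : EuclideanSpace ℝ (Fin 3) :=
  if 0 < ξ 0 ^ 2 + ξ 2 ^ 2 then toE3 ![-(ξ 0 * ξ 1), ξ 0 ^ 2 + ξ 2 ^ 2, -(ξ 1 * ξ 2)]
  else toE3 ![ξ 1, 0, ξ 1]

/-- The vector `𝔟(ξ)`. -/
def frakB (ξ : EuclideanSpace ℝ (Fin 3)) : EuclideanSpace ℝ (Fin 3) :=
  if 0 < ξ 0 ^ 2 + ξ 2 ^ 2 then toE3 ![-(ξ 2 * ‖ξ‖), 0, ξ 0 * ‖ξ‖]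
  else toE3 ![|ξ 1|, 0, -|ξ 1|]

/-- `N(ξ) = √(|𝔞(ξ)|² + |𝔟(ξ)|²)`. -/
def frakN (ξ : EuclideanSpace ℝ (Fin 3)) : ℝ :=
  Real.sqrt (‖frakA ξ‖ ^ 2 + ‖frakB ξ‖ ^ 2)

/-- The vector of `ℂ⁶` obtained from the pair `(u, v)` of vectors of `ℝ³`. -/
def pairC6 (u v : EuclideanSpace ℝ (Fin 3)) : EuclideanSpace ℂ (Fin 6) :=
  toC6 ![(u 0 : ℂ), (u 1 : ℂ), (u 2 : ℂ), (v 0 : ℂ), (v 1 : ℂ), (v 2 : ℂ)]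

/-- The six vectors `(𝔞,𝔟)/N, (−𝔟,𝔞)/N, (0,ξ)/|ξ|, (ξ,0)/|ξ|, (−𝔞,𝔟)/N, (𝔟,𝔞)/N`. -/
def maxwellBasis (ξ : EuclideanSpace ℝ (Fin 3)) : Fin 6 → EuclideanSpace ℂ (Fin 6) :=
  ![(frakN ξ)⁻¹ • pairC6 (frakA ξ) (frakB ξ),
    (frakN ξ)⁻¹ • pairC6 (-frakB ξ) (frakA ξ),
    ‖ξ‖⁻¹ • pairC6 0 ξ,
    ‖ξ‖⁻¹ • pairC6 ξ 0,
    (frakN ξ)⁻¹ • pairC6 (-frakA ξ) (frakB ξ),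
    (frakN ξ)⁻¹ • pairC6 (frakB ξ) (frakA ξ)]

/-- The corresponding eigenvalues `|ξ|, |ξ|, 0, 0, −|ξ|, −|ξ|`. -/
def maxwellEigenvalues (ξ : EuclideanSpace ℝ (Fin 3)) : Fin 6 → ℝ :=
  ![‖ξ‖, ‖ξ‖, 0, 0, -‖ξ‖, -‖ξ‖]

/- ### Auxiliary material -/

lemma cons5 {α : Type*} (a b c d e f : α) : ![a, b, c, d, e, f] 5 = f := rfl

lemma cons3two {α : Type*} (a b c : α) : ![a, b, c] 2 = c := rfl

lemma mmk2 (h : 2 < 6) : (⟨2, h⟩ : Fin 6) = 2 := rfl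
lemma mmk3 (h : 3 < 6) : (⟨3, h⟩ : Fin 6) = 3 := rfl
lemma mmk4 (h : 4 < 6) : (⟨4, h⟩ : Fin 6) = 4 := rfl
lemma mmk5 (h : 5 < 6) : (⟨5, h⟩ : Fin 6) = 5 := rfl

lemma inner_smul_pair (s t : ℝ) (u v u' v' : EuclideanSpace ℝ (Fin 3)) :
    inner ℂ (s • pairC6 u v) (t • pairC6 u' v') =
      ((s * t * ((u 0 * u' 0 + u 1 * u' 1 + u 2 * u' 2)
        + (v 0 * v' 0 + v 1 * v' 1 + v 2 * v' 2)) : ℝ) : ℂ) := by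
  simp [pairC6, toC6, PiLp.inner_apply, Fin.sum_univ_six, RCLike.inner_apply, cons5]
  ring

lemma norm_sq_E3 (x : EuclideanSpace ℝ (Fin 3)) :
    ‖x‖ ^ 2 = x 0 ^ 2 + x 1 ^ 2 + x 2 ^ 2 := by
  rw [EuclideanSpace.norm_eq, Real.sq_sqrt (by positivity)]
  simp [Fin.sum_univ_three, Real.norm_eq_abs, sq_abs]

lemma eigen_aux (ξ u v : EuclideanSpace ℝ (Fin 3)) (c lam : ℝ)
    (e1 : ξ 2 * v 1 - ξ 1 * v 2 = lam * u 0)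
    (e2 : ξ 0 * v 2 - ξ 2 * v 0 = lam * u 1)
    (e3 : ξ 1 * v 0 - ξ 0 * v 1 = lam * u 2)
    (e4 : ξ 1 * u 2 - ξ 2 * u 1 = lam * v 0)
    (e5 : ξ 2 * u 0 - ξ 0 * u 2 = lam * v 1)
    (e6 : ξ 0 * u 1 - ξ 1 * u 0 = lam * v 2) :
    Matrix.toEuclideanLin (maxwellSymbol ξ) (c • pairC6 u v)
      = ((lam : ℝ) : ℂ) • (c • pairC6 u v) := by
  have E1 : ((ξ 2 * v 1 - ξ 1 * v 2 : ℝ) : ℂ) = ((lam * u 0 : ℝ) : ℂ) := by rw [e1]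
  have E2 : ((ξ 0 * v 2 - ξ 2 * v 0 : ℝ) : ℂ) = ((lam * u 1 : ℝ) : ℂ) := by rw [e2]
  have E3 : ((ξ 1 * v 0 - ξ 0 * v 1 : ℝ) : ℂ) = ((lam * u 2 : ℝ) : ℂ) := by rw [e3]
  have E4 : ((ξ 1 * u 2 - ξ 2 * u 1 : ℝ) : ℂ) = ((lam * v 0 : ℝ) : ℂ) := by rw [e4]
  have E5 : ((ξ 2 * u 0 - ξ 0 * u 2 : ℝ) : ℂ) = ((lam * v 1 : ℝ) : ℂ) := by rw [e5]
  have E6 : ((ξ 0 * u 1 - ξ 1 * u 0 : ℝ) : ℂ) = ((lam * v 2 : ℝ) : ℂ) := by rw [e6]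
  push_cast at E1 E2 E3 E4 E5 E6
  ext j
  fin_cases j <;>
    simp [Matrix.toEuclideanLin_apply, Matrix.mulVec, dotProduct,
      Fin.sum_univ_six, maxwellSymbol, pairC6, toC6, cons5, PiLp.smul_apply,
      Complex.real_smul, Matrix.cons_val_succ] <;>
    (first
      | linear_combination (c : ℂ) * E1
      | linear_combination (c : ℂ) * E2
      | linear_combination (c : ℂ) * E3
      | linear_combination (c : ℂ) * E4
      | linear_combination (c : ℂ) * E5
      | linear_combination (c : ℂ) * E6)

set_option maxHeartbeats 2000000 in
lemma maxwell_key (ξ a b : EuclideanSpace ℝ (Fin 3)) (r N : ℝ)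
    (hr : r ≠ 0) (hN : N ≠ 0)
    (hr2 : ξ 0 ^ 2 + ξ 1 ^ 2 + ξ 2 ^ 2 = r ^ 2)
    (hNa : 2 * (a 0 ^ 2 + a 1 ^ 2 + a 2 ^ 2) = N ^ 2)
    (hNb : 2 * (b 0 ^ 2 + b 1 ^ 2 + b 2 ^ 2) = N ^ 2)
    (hab : a 0 * b 0 + a 1 * b 1 + a 2 * b 2 = 0)
    (hax : a 0 * ξ 0 + a 1 * ξ 1 + a 2 * ξ 2 = 0)
    (hbx : b 0 * ξ 0 + b 1 * ξ 1 + b 2 * ξ 2 = 0)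
    (hc1 : ξ 1 * a 2 - ξ 2 * a 1 = r * b 0)
    (hc2 : ξ 2 * a 0 - ξ 0 * a 2 = r * b 1)
    (hc3 : ξ 0 * a 1 - ξ 1 * a 0 = r * b 2)
    (hd1 : ξ 1 * b 2 - ξ 2 * b 1 = -(r * a 0))
    (hd2 : ξ 2 * b 0 - ξ 0 * b 2 = -(r * a 1))
    (hd3 : ξ 0 * b 1 - ξ 1 * b 0 = -(r * a 2)) :
    Orthonormal ℂ
      ![N⁻¹ • pairC6 a b, N⁻¹ • pairC6 (-b) a, r⁻¹ • pairC6 0 ξ,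
        r⁻¹ • pairC6 ξ 0, N⁻¹ • pairC6 (-a) b, N⁻¹ • pairC6 b a] ∧
    Submodule.span ℂ (Set.range
      ![N⁻¹ • pairC6 a b, N⁻¹ • pairC6 (-b) a, r⁻¹ • pairC6 0 ξ,
        r⁻¹ • pairC6 ξ 0, N⁻¹ • pairC6 (-a) b, N⁻¹ • pairC6 b a]) = ⊤ ∧
    ∀ i : Fin 6,
      Matrix.toEuclideanLin (maxwellSymbol ξ)
          (![N⁻¹ • pairC6 a b, N⁻¹ • pairC6 (-b) a, r⁻¹ • pairC6 0 ξ,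
            r⁻¹ • pairC6 ξ 0, N⁻¹ • pairC6 (-a) b, N⁻¹ • pairC6 b a] i)
        = ((![r, r, 0, 0, -r, -r] i : ℝ) : ℂ) •
          ![N⁻¹ • pairC6 a b, N⁻¹ • pairC6 (-b) a, r⁻¹ • pairC6 0 ξ,
            r⁻¹ • pairC6 ξ 0, N⁻¹ • pairC6 (-a) b, N⁻¹ • pairC6 b a] i := by
  have hON : Orthonormal ℂ
      ![N⁻¹ • pairC6 a b, N⁻¹ • pairC6 (-b) a, r⁻¹ • pairC6 0 ξ,
        r⁻¹ • pairC6 ξ 0, N⁻¹ • pairC6 (-a) b, N⁻¹ • pairC6 b a] := by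
    rw [orthonormal_iff_ite]
    intro i j
    fin_cases i <;> fin_cases j <;>
      simp only [Matrix.cons_val_zero, Matrix.cons_val_one, Matrix.head_cons,
        Matrix.cons_val_two, Matrix.cons_val_three, Matrix.cons_val_four, cons5,
        Matrix.tail_cons, Fin.mk_zero, Fin.mk_one, mmk2, mmk3, mmk4, mmk5] <;>
      rw [inner_smul_pair] <;>
      simp only [PiLp.neg_apply, PiLp.zero_apply] <;>
      simp only [Fin.reduceEq, reduceIte] <;>
      norm_cast <;>
      field_simp [hN, hr] <;>
      (try linarith [hNa, hNb, hab, hax, hbx, hr2]) <;>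
      (try (push_cast; linarith [hr2]))
  refine ⟨hON, ?_, ?_⟩
  · exact hON.linearIndependent.span_eq_top_of_card_eq_finrank
      (by simp [finrank_euclideanSpace])
  · intro i
    fin_cases i <;>
      simp only [Matrix.cons_val_zero, Matrix.cons_val_one, Matrix.head_cons,
        Matrix.cons_val_two, Matrix.cons_val_three, Matrix.cons_val_four, cons5,
        Matrix.tail_cons, Fin.mk_zero, Fin.mk_one, mmk2, mmk3, mmk4, mmk5]
    · exact eigen_aux ξ a b N⁻¹ r (by linarith [hd1]) (by linarith [hd2])
        (by linarith [hd3]) (by linarith [hc1]) (by linarith [hc2]) (by linarith [hc3])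
    · exact eigen_aux ξ (-b) a N⁻¹ r
        (by simp only [PiLp.neg_apply]; linarith [hc1])
        (by simp only [PiLp.neg_apply]; linarith [hc2])
        (by simp only [PiLp.neg_apply]; linarith [hc3])
        (by simp only [PiLp.neg_apply]; linarith [hd1])
        (by simp only [PiLp.neg_apply]; linarith [hd2])
        (by simp only [PiLp.neg_apply]; linarith [hd3])
    · exact eigen_aux ξ 0 ξ r⁻¹ 0
        (by simp only [PiLp.zero_apply]; ring) (by simp only [PiLp.zero_apply]; ring)
        (by simp only [PiLp.zero_apply]; ring) (by simp only [PiLp.zero_apply]; ring)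
        (by simp only [PiLp.zero_apply]; ring) (by simp only [PiLp.zero_apply]; ring)
    · exact eigen_aux ξ ξ 0 r⁻¹ 0
        (by simp only [PiLp.zero_apply]; ring) (by simp only [PiLp.zero_apply]; ring)
        (by simp only [PiLp.zero_apply]; ring) (by simp only [PiLp.zero_apply]; ring)
        (by simp only [PiLp.zero_apply]; ring) (by simp only [PiLp.zero_apply]; ring)
    · exact eigen_aux ξ (-a) b N⁻¹ (-r)
        (by simp only [PiLp.neg_apply]; linarith [hd1])
        (by simp only [PiLp.neg_apply]; linarith [hd2])
        (by simp only [PiLp.neg_apply]; linarith [hd3])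
        (by simp only [PiLp.neg_apply]; linarith [hc1])
        (by simp only [PiLp.neg_apply]; linarith [hc2])
        (by simp only [PiLp.neg_apply]; linarith [hc3])
    · exact eigen_aux ξ b a N⁻¹ (-r)
        (by linarith [hc1]) (by linarith [hc2]) (by linarith [hc3])
        (by linarith [hd1]) (by linarith [hd2]) (by linarith [hd3])

set_option maxHeartbeats 1000000 in
/-- for `ξ ≠ 0` the six vectors above form an orthonormal basis of `ℂ⁶`
consisting of eigenvectors of the Maxwell symbol `M_maxwell(ξ)`, the first two with
eigenvalue `|ξ|`, the middle two with eigenvalue `0`, and the last two with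
eigenvalue `−|ξ|`. -/
theorem maxwellBasis_orthonormal_eigenvectors (ξ : EuclideanSpace ℝ (Fin 3)) (hξ : ξ ≠ 0) :
    Orthonormal ℂ (maxwellBasis ξ) ∧
    Submodule.span ℂ (Set.range (maxwellBasis ξ)) = ⊤ ∧
    ∀ i : Fin 6,
      Matrix.toEuclideanLin (maxwellSymbol ξ) (maxwellBasis ξ i)
        = ((maxwellEigenvalues ξ i : ℝ) : ℂ) • maxwellBasis ξ i := by
  have hr : ‖ξ‖ ≠ 0 := norm_ne_zero_iff.mpr hξ
  have hr2 : ξ 0 ^ 2 + ξ 1 ^ 2 + ξ 2 ^ 2 = ‖ξ‖ ^ 2 := (norm_sq_E3 ξ).symm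
  have hN2 : frakN ξ ^ 2 = ‖frakA ξ‖ ^ 2 + ‖frakB ξ‖ ^ 2 :=
    Real.sq_sqrt (by positivity)
  rw [norm_sq_E3 (frakA ξ), norm_sq_E3 (frakB ξ)] at hN2
  by_cases h : 0 < ξ 0 ^ 2 + ξ 2 ^ 2
  · have hA : frakA ξ = toE3 ![-(ξ 0 * ξ 1), ξ 0 ^ 2 + ξ 2 ^ 2, -(ξ 1 * ξ 2)] := by
      rw [frakA, if_pos h]
    have hB : frakB ξ = toE3 ![-(ξ 2 * ‖ξ‖), 0, ξ 0 * ‖ξ‖] := by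
      rw [frakB, if_pos h]
    have hA0 : frakA ξ 0 = -(ξ 0 * ξ 1) := by rw [hA]; rfl
    have hA1 : frakA ξ 1 = ξ 0 ^ 2 + ξ 2 ^ 2 := by rw [hA]; rfl
    have hA2 : frakA ξ 2 = -(ξ 1 * ξ 2) := by rw [hA]; rfl
    have hB0 : frakB ξ 0 = -(ξ 2 * ‖ξ‖) := by rw [hB]; rfl
    have hB1 : frakB ξ 1 = 0 := by rw [hB]; rfl
    have hB2 : frakB ξ 2 = ξ 0 * ‖ξ‖ := by rw [hB]; rfl
    rw [hA0, hA1, hA2, hB0, hB1, hB2] at hN2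
    have hrpos : 0 < ‖ξ‖ ^ 2 := by positivity
    have hNpos : 0 < frakN ξ ^ 2 := by nlinarith [sq_nonneg (ξ 0 * ξ 1), sq_nonneg (ξ 1 * ξ 2), sq_nonneg (ξ 0 ^ 2 + ξ 2 ^ 2)]
    have hN : frakN ξ ≠ 0 := by
      intro h0; rw [h0] at hNpos; simp at hNpos
    have key := maxwell_key ξ (frakA ξ) (frakB ξ) ‖ξ‖ (frakN ξ) hr hN hr2
      (by rw [hA0, hA1, hA2]; nlinarith [hr2])
      (by rw [hB0, hB1, hB2]; nlinarith [hr2])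
      (by rw [hA0, hA1, hA2, hB0, hB1, hB2]; ring)
      (by rw [hA0, hA1, hA2]; ring)
      (by rw [hB0, hB1, hB2]; ring)
      (by rw [hA1, hA2, hB0]; linear_combination (-(ξ 2)) * hr2)
      (by rw [hA0, hA2, hB1]; ring)
      (by rw [hA0, hA1, hB2]; linear_combination (ξ 0) * hr2)
      (by rw [hB1, hB2, hA0]; ring)
      (by rw [hB0, hB2, hA1]; ring)
      (by rw [hB0, hB1, hA2]; ring)
    simpa only [maxwellBasis, maxwellEigenvalues] using key
  · push_neg at h
    have h0 : ξ 0 = 0 := by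
      have : ξ 0 ^ 2 = 0 := by nlinarith [sq_nonneg (ξ 0), sq_nonneg (ξ 2)]
      exact pow_eq_zero_iff two_ne_zero |>.mp this
    have h2 : ξ 2 = 0 := by
      have : ξ 2 ^ 2 = 0 := by nlinarith [sq_nonneg (ξ 0), sq_nonneg (ξ 2)]
      exact pow_eq_zero_iff two_ne_zero |>.mp this
    have hrabs : ‖ξ‖ = |ξ 1| := by
      have : ‖ξ‖ ^ 2 = ξ 1 ^ 2 := by rw [← hr2, h0, h2]; ring
      calc ‖ξ‖ = Real.sqrt (‖ξ‖ ^ 2) := (Real.sqrt_sq (norm_nonneg ξ)).symm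
        _ = Real.sqrt (ξ 1 ^ 2) := by rw [this]
        _ = |ξ 1| := Real.sqrt_sq_eq_abs _
    have h1 : ξ 1 ≠ 0 := by
      intro h1
      exact hr (by rw [hrabs, h1, abs_zero])
    have hA : frakA ξ = toE3 ![ξ 1, 0, ξ 1] := by
      rw [frakA, if_neg (by push_neg; exact h)]
    have hB : frakB ξ = toE3 ![|ξ 1|, 0, -|ξ 1|] := by
      rw [frakB, if_neg (by push_neg; exact h)]
    have hA0 : frakA ξ 0 = ξ 1 := by rw [hA]; rfl
    have hA1 : frakA ξ 1 = 0 := by rw [hA]; rfl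
    have hA2 : frakA ξ 2 = ξ 1 := by rw [hA]; rfl
    have hB0 : frakB ξ 0 = |ξ 1| := by rw [hB]; rfl
    have hB1 : frakB ξ 1 = 0 := by rw [hB]; rfl
    have hB2 : frakB ξ 2 = -|ξ 1| := by rw [hB]; rfl
    rw [hA0, hA1, hA2, hB0, hB1, hB2] at hN2
    have habs : |ξ 1| * |ξ 1| = ξ 1 * ξ 1 := abs_mul_abs_self _
    have hNpos : 0 < frakN ξ ^ 2 := by
      rw [hN2]; nlinarith [sq_nonneg (ξ 1), _root_.sq_abs (ξ 1), (pow_ne_zero_iff two_ne_zero).mpr h1 |>.lt_of_le' (sq_nonneg (ξ 1)) ]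
    have hN : frakN ξ ≠ 0 := by
      intro h0'; rw [h0'] at hNpos; simp at hNpos
    have key := maxwell_key ξ (frakA ξ) (frakB ξ) ‖ξ‖ (frakN ξ) hr hN hr2
      (by rw [hA0, hA1, hA2]; nlinarith [_root_.sq_abs (ξ 1)])
      (by rw [hB0, hB1, hB2]; nlinarith [_root_.sq_abs (ξ 1)])
      (by rw [hA0, hA1, hA2, hB0, hB1, hB2]; ring)
      (by rw [hA0, hA1, hA2, h0, h2]; ring)
      (by rw [hB0, hB1, hB2, h0, h2]; ring)
      (by rw [hA1, hA2, hB0, h2, hrabs]; linarith [habs])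
      (by rw [hA0, hA2, hB1, h0, h2]; ring)
      (by rw [hA0, hA1, hB2, h0, hrabs]; nlinarith [habs])
      (by rw [hB1, hB2, hA0, h2, hrabs]; nlinarith [habs])
      (by rw [hB0, hB2, hA1, h0, h2]; ring)
      (by rw [hB0, hB1, hA2, h0, hrabs]; nlinarith [habs])
    simpa only [maxwellBasis, maxwellEigenvalues] using key

end
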